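/- arXiv:1907.00861 — 3 statements merged into one kernel-verified Lean document; each statement's English description precedes it below -/
import Mathlib

section
/- If C is the binary code of a (6,4) net, then the dimension of C over F₂ is at most 20. -/
/-!
Let `A` be the `24 × 36` incidence matrix over `𝔽₂`, so that `dim C = rank A`. Two lines of the
same parallel class meet in `0` or `6` points and lines of different classes in one point, so
`A Aᵀ` only depends on the parallel classes of the two lines and has rank at most `4`. Sylvester's
rank inequality `2 rank A ≤ 36 + rank (A Aᵀ)` then gives `dim C ≤ 20`.
-/

/-- A `(6,4)` net on a point type `P`: 36 points, lines of size 6 indexed by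
4 parallel classes of 6 lines each; each parallel class partitions the point set,
and two lines from different parallel classes meet in exactly one point. -/
structure Net64 (P : Type) [Fintype P] [DecidableEq P] where
  line : Fin 4 → Fin 6 → Finset P
  card_points : Fintype.card P = 36
  line_card : ∀ i j, (line i j).card = 6
  partition : ∀ (i : Fin 4) (p : P), ∃! j : Fin 6, p ∈ line i j
  meet : ∀ (i i' : Fin 4) (j j' : Fin 6), i ≠ i' → (line i j ∩ line i' j').card = 1

/-- The characteristic function `v^s` of a finite set `s`, with values in `F₂`. -/
def chi {P : Type} [DecidableEq P] (s : Finset P) : P → ZMod 2 :=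
  fun p => if p ∈ s then 1 else 0

/-- The binary code of a net: the `F₂`-span of the characteristic functions of its lines. -/
def Net64.code {P : Type} [Fintype P] [DecidableEq P] (N : Net64 P) :
    Submodule (ZMod 2) (P → ZMod 2) :=
  Submodule.span (ZMod 2) (Set.range fun x : Fin 4 × Fin 6 => chi (N.line x.1 x.2))

open Matrix Module

theorem Submodule.finrank_le_finrank_map_add_finrank_ker {K V W : Type*} [Field K]
    [AddCommGroup V] [Module K V] [AddCommGroup W] [Module K W] [FiniteDimensional K V]
    (f : V →ₗ[K] W) (p : Submodule K V) :
    finrank K p ≤ finrank K (p.map f) + finrank K (LinearMap.ker f) := by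
  have hker : finrank K (LinearMap.ker (f.domRestrict p)) ≤ finrank K (LinearMap.ker f) := by
    rw [LinearMap.ker_domRestrict, ← Submodule.finrank_map_subtype_eq, Submodule.map_comap_subtype]
    exact Submodule.finrank_mono inf_le_right
  have := (f.domRestrict p).finrank_range_add_finrank_ker
  rw [LinearMap.range_domRestrict] at this
  omega

theorem Matrix.rank_add_rank_le_card_add_rank_mul {K m n o : Type*} [Field K] [Fintype m]
    [Fintype n] [Fintype o] (A : Matrix m n K) (B : Matrix n o K) :
    A.rank + B.rank ≤ Fintype.card n + (A * B).rank := by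
  have hA := A.mulVecLin.finrank_range_add_finrank_ker
  have hAB := Submodule.finrank_le_finrank_map_add_finrank_ker A.mulVecLin
    (LinearMap.range B.mulVecLin)
  rw [← LinearMap.range_comp, ← Matrix.mulVecLin_mul] at hAB
  rw [finrank_fintype_fun_eq_card] at hA
  rw [Matrix.rank, Matrix.rank, Matrix.rank]
  omega

theorem chi_dotProduct_chi {P : Type} [Fintype P] [DecidableEq P] (s t : Finset P) :
    chi s ⬝ᵥ chi t = ((s ∩ t).card : ZMod 2) := by
  simp only [dotProduct, chi, ite_mul, one_mul, zero_mul]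
  rw [Finset.sum_ite_mem, Finset.univ_inter, Finset.sum_boole, Finset.filter_mem_eq_inter]

namespace Net64

variable {P : Type} [Fintype P] [DecidableEq P] (N : Net64 P)

theorem disjoint_line {i : Fin 4} {j j' : Fin 6} (h : j ≠ j') :
    Disjoint (N.line i j) (N.line i j') := by
  rw [Finset.disjoint_left]
  intro p hj hj'
  obtain ⟨_, _, huniq⟩ := N.partition i p
  exact h ((huniq j hj).trans (huniq j' hj').symm)

theorem cast_card_line_inter_line (i i' : Fin 4) (j j' : Fin 6) :
    ((N.line i j ∩ N.line i' j').card : ZMod 2) = if i = i' then 0 else 1 := by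
  by_cases hi : i = i'
  · subst hi
    by_cases hj : j = j'
    · subst hj
      simp only [Finset.inter_self, N.line_card, if_true]
      decide
    · simp [Finset.disjoint_iff_inter_eq_empty.mp (N.disjoint_line hj)]
  · simp [N.meet i i' j j' hi, hi]

def incidence : Matrix (Fin 4 × Fin 6) P (ZMod 2) :=
  Matrix.of fun x => chi (N.line x.1 x.2)

theorem finrank_code : finrank (ZMod 2) N.code = N.incidence.rank :=
  (Matrix.rank_eq_finrank_span_row _).symm

theorem incidence_mul_transpose :
    N.incidence * N.incidenceᵀ =
      (Matrix.of fun i i' : Fin 4 => if i = i' then (0 : ZMod 2) else 1).submatrix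
        Prod.fst Prod.fst := by
  ext ⟨i, j⟩ ⟨i', j'⟩
  exact (chi_dotProduct_chi _ _).trans (N.cast_card_line_inter_line i i' j j')

theorem rank_incidence_mul_transpose_le : (N.incidence * N.incidenceᵀ).rank ≤ 4 := by
  rw [incidence_mul_transpose]
  exact (Matrix.rank_submatrix_le _ _ _).trans ((Matrix.rank_le_card_width _).trans_eq
    (Fintype.card_fin 4))

end Net64

/-- The binary code of a `(6,4)` net has dimension at most 20 over `F₂`. -/
theorem net64_code_finrank_le_20 {P : Type} [Fintype P] [DecidableEq P] (N : Net64 P) :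
    Module.finrank (ZMod 2) N.code ≤ 20 := by
  have hsylvester := N.incidence.rank_add_rank_le_card_add_rank_mul N.incidenceᵀ
  rw [Matrix.rank_transpose, N.card_points] at hsylvester
  have := N.rank_incidence_mul_transpose_le
  rw [N.finrank_code]
  omega
end

section
/- If C is the binary code of a (6,4) net and H = C ∩ C^⊥ is its hull, then dim H = dim C − 4. -/
/-- The orthogonal complement of a subspace of `F₂^P` with respect to the standard
dot product `f · g = ∑ p, f p * g p`. -/
def dualCode {P : Type} [Fintype P] (C : Submodule (ZMod 2) (P → ZMod 2)) :
    Submodule (ZMod 2) (P → ZMod 2) where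
  carrier := {f | ∀ g ∈ C, ∑ p, f p * g p = 0}
  add_mem' := by
    intro a b ha hb g hg
    have h1 := ha g hg
    have h2 := hb g hg
    simp only [Set.mem_setOf_eq, Pi.add_apply, add_mul] at *
    rw [Finset.sum_add_distrib, h1, h2, add_zero]
  zero_mem' := by
    intro g hg
    simp
  smul_mem' := by
    intro c f hf g hg
    have h1 := hf g hg
    simp only [Set.mem_setOf_eq, Pi.smul_apply, smul_eq_mul, mul_assoc] at *
    rw [← Finset.mul_sum, h1, mul_zero]

/-!
The Gram map `Φ : f ↦ (f · v^λ)_λ` has kernel `C^⊥`, so its kernel on `C` is the hull and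
rank–nullity gives `dim C = dim H + dim Φ(C)`. Parallel lines meet in `0` or `6` points, lines of
different classes in one, so over `F₂` the vector `Φ(v^λ)` only depends on the class `i` of `λ`:
it is `1 - e_i` evaluated at the class index. The four vectors `1 - e_i` of `F₂⁴` are independent
because `4 - 1 ≠ 0` in `F₂`, hence `dim Φ(C) = 4`.
-/

open Module Submodule

theorem finrank_map_add_finrank_inf_ker {K V W : Type*} [DivisionRing K] [AddCommGroup V]
    [Module K V] [AddCommGroup W] [Module K W] (f : V →ₗ[K] W) (C : Submodule K V)
    [FiniteDimensional K C] :
    finrank K (C.map f) + finrank K (C ⊓ LinearMap.ker f : Submodule K V) = finrank K C := by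
  have h := LinearMap.finrank_range_add_finrank_ker (f.domRestrict C)
  rw [LinearMap.range_domRestrict, LinearMap.ker_domRestrict] at h
  have hker : comap C.subtype (LinearMap.ker f) = comap C.subtype (C ⊓ LinearMap.ker f) := by
    rw [comap_inf, comap_subtype_self, top_inf_eq]
  rwa [hker, (comapSubtypeEquivOfLe inf_le_left).finrank_eq] at h

theorem linearIndependent_one_sub_single {K ι : Type*} [Field K] [Fintype ι] [DecidableEq ι]
    (h : (Fintype.card ι : K) - 1 ≠ 0) :
    LinearIndependent K fun i : ι => (1 - Pi.single i 1 : ι → K) := by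
  rw [Fintype.linearIndependent_iff]
  intro c hc
  have hc_eq_sum : ∀ i, c i = ∑ j, c j := fun i => by
    have := congrFun hc i
    simp only [Finset.sum_apply, Pi.smul_apply, Pi.sub_apply, Pi.one_apply, Pi.single_apply,
      smul_eq_mul, mul_sub, mul_one, mul_ite, mul_zero, Finset.sum_sub_distrib,
      Finset.sum_ite_eq, Finset.mem_univ, if_true, Pi.zero_apply] at this
    exact (sub_eq_zero.1 this).symm
  have hsum : ∑ j, c j = 0 := by
    have h_sum_eq : ∑ i, c i = Fintype.card ι * ∑ j, c j :=
      (Finset.sum_congr rfl fun i _ => hc_eq_sum i).trans <| by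
        rw [Finset.sum_const, Finset.card_univ, nsmul_eq_mul]
    have : ((Fintype.card ι : K) - 1) * ∑ j, c j = 0 := by
      rw [sub_mul, one_mul, ← h_sum_eq, sub_self]
    exact (mul_eq_zero.1 this).resolve_left h
  intro i
  rw [hc_eq_sum i, hsum]

theorem chi_dot_chi {P : Type} [Fintype P] [DecidableEq P] (s t : Finset P) :
    ∑ p, chi s p * chi t p = ((s ∩ t).card : ZMod 2) := by
  simp [chi, Finset.inter_comm]

section GramMap

variable {P : Type} {ι : Type*} [Fintype P]

def gramMap (v : ι → P → ZMod 2) : (P → ZMod 2) →ₗ[ZMod 2] ι → ZMod 2 :=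
  (Matrix.of fun p i => v i p).vecMulLinear

theorem gramMap_apply (v : ι → P → ZMod 2) (f : P → ZMod 2) (i : ι) :
    gramMap v f i = ∑ p, f p * v i p :=
  rfl

theorem dualCode_span_eq_ker (v : ι → P → ZMod 2) :
    dualCode (span (ZMod 2) (Set.range v)) = LinearMap.ker (gramMap v) := by
  ext f
  refine ⟨fun hf => ?_, fun hf g hg => ?_⟩
  · exact funext fun i => hf _ (subset_span ⟨i, rfl⟩)
  · have hle :
        span (ZMod 2) (Set.range v) ≤ LinearMap.ker (dotProductBilin (ZMod 2) (ZMod 2) f) := by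
      rw [span_le]
      rintro _ ⟨i, rfl⟩
      exact congrFun hf i
    exact hle hg

end GramMap

namespace Net64

def classVec (i : Fin 4) : Fin 4 × Fin 6 → ZMod 2 :=
  fun y => (1 - Pi.single i 1 : Fin 4 → ZMod 2) y.1

variable {P : Type} [Fintype P] [DecidableEq P] (N : Net64 P)

def lineVec : Fin 4 × Fin 6 → P → ZMod 2 := fun x => chi (N.line x.1 x.2)

theorem dualCode_code : dualCode N.code = LinearMap.ker (gramMap N.lineVec) :=
  dualCode_span_eq_ker N.lineVec

theorem inter_line_of_ne (i : Fin 4) {j j' : Fin 6} (h : j ≠ j') :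
    N.line i j ∩ N.line i j' = ∅ := by
  rw [Finset.eq_empty_iff_forall_notMem]
  intro p hp
  rw [Finset.mem_inter] at hp
  obtain ⟨_, _, hu⟩ := N.partition i p
  exact h ((hu j hp.1).trans (hu j' hp.2).symm)

theorem gramMap_lineVec (x : Fin 4 × Fin 6) :
    gramMap N.lineVec (N.lineVec x) = classVec x.1 := by
  obtain ⟨i, j⟩ := x
  funext ⟨i', j'⟩
  rw [gramMap_apply, lineVec, lineVec, chi_dot_chi, classVec]
  by_cases hi : i' = i
  · subst hi
    rcases eq_or_ne j j' with rfl | hj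
    · rw [Finset.inter_self, N.line_card, Pi.sub_apply, Pi.one_apply, Pi.single_eq_same]
      decide
    · simp [N.inter_line_of_ne i' hj]
  · simp [N.meet i i' j j' (Ne.symm hi), hi]

theorem map_gramMap_code :
    N.code.map (gramMap N.lineVec) = span (ZMod 2) (Set.range classVec) := by
  rw [Net64.code, map_span, ← Set.range_comp]
  congr 1
  ext v
  constructor
  · rintro ⟨x, rfl⟩
    exact ⟨x.1, (N.gramMap_lineVec x).symm⟩
  · rintro ⟨i, rfl⟩
    exact ⟨(i, 0), N.gramMap_lineVec (i, 0)⟩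

theorem finrank_map_gramMap_code : finrank (ZMod 2) (N.code.map (gramMap N.lineVec)) = 4 := by
  have hli := (linearIndependent_one_sub_single (K := ZMod 2) (ι := Fin 4) (by decide)).map'
    (LinearMap.funLeft (ZMod 2) (ZMod 2) (Prod.fst : Fin 4 × Fin 6 → Fin 4))
    (LinearMap.ker_eq_bot.2 (LinearMap.funLeft_injective_of_surjective _ _ _ Prod.fst_surjective))
  rw [map_gramMap_code]
  exact (finrank_span_eq_card hli).trans (Fintype.card_fin 4)

end Net64

/-- For the binary code `C` of a `(6,4)` net and its hull `H = C ⊓ C^⊥`,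
`dim H = dim C − 4`. -/
theorem net64_hull_finrank {P : Type} [Fintype P] [DecidableEq P] (N : Net64 P) :
    Module.finrank (ZMod 2) (N.code ⊓ dualCode N.code : Submodule (ZMod 2) (P → ZMod 2))
      = Module.finrank (ZMod 2) N.code - 4 := by
  have h := finrank_map_add_finrank_inf_ker (gramMap N.lineVec) N.code
  rw [N.finrank_map_gramMap_code, ← N.dualCode_code] at h
  omega
end

section
/- In a (6,4) net, if M is a set of lines with parallax (2,2,4,0) (up to permutation of the parallel classes), then c(M) ≠ 0; indeed wt(c(M)) = 4p₃ + 8p₄ + 8 ≥ 8, where p₃ and p₄ are the numbers of 3-points and 4-points of M. -/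
/-- `c(Λ)`: the `F₂`-sum of the characteristic functions of a set of lines of the net,
a set of lines being given by the finite set of its (class, index) pairs. -/
def Net64.cSum {P : Type} [Fintype P] [DecidableEq P] (N : Net64 P)
    (Λ : Finset (Fin 4 × Fin 6)) : P → ZMod 2 :=
  ∑ x ∈ Λ, chi (N.line x.1 x.2)

/-- `lᵢ = |Λ ∩ Πᵢ|`: the number of lines of `Λ` in the `i`-th parallel class. -/
def lcount (Λ : Finset (Fin 4 × Fin 6)) (i : Fin 4) : ℕ :=
  (Λ.filter fun x => x.1 = i).card

/-- `pⱼ`: the number of points of the net lying on exactly `j` lines of `Λ`. -/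
def Net64.pcount {P : Type} [Fintype P] [DecidableEq P] (N : Net64 P)
    (Λ : Finset (Fin 4 × Fin 6)) (j : ℕ) : ℕ :=
  (Finset.univ.filter fun p : P => (Λ.filter fun x => p ∈ N.line x.1 x.2).card = j).card

/-- The Hamming weight of `f ∈ F₂^P`: the number of points where `f` is nonzero. -/
def wt {P : Type} [Fintype P] (f : P → ZMod 2) : ℕ :=
  (Finset.univ.filter fun p => f p ≠ 0).card

/-!
Write `dₚ` for the number of lines of `M` through `p`. A point lies on exactly one line of each
class, so `dₚ ≤ 4`, and `c(M)(p) = dₚ mod 2`, whence `wt(c(M)) = p₁ + p₃`. Double counting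
incidences, and ordered pairs of lines of `M` through a common point (lines of one class are
disjoint, lines of different classes meet once), gives the two moments
`∑ dₚ = 6|M|` and `∑ dₚ² = 6|M| + |M|² - ∑ lᵢ²`. Eliminating `p₁` and `p₂` yields
`wt(c(M)) = 6|M| - |M|² + ∑ lᵢ² + 4p₃ + 8p₄` for every set of lines, and the parallax
`(2,2,4,0)` gives `|M| = 8`, `∑ lᵢ² = 24`.
-/

open Finset

section DoubleCounting

variable {ι P : Type} [Fintype P] [DecidableEq P] (s : Finset ι) (A : ι → Finset P)

theorem sum_card_filter_mem :
    ∑ p, #{x ∈ s | p ∈ A x} = ∑ x ∈ s, #(A x) := by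
  simpa [bipartiteAbove, bipartiteBelow, filter_mem_eq_inter] using
    sum_card_bipartiteAbove_eq_sum_card_bipartiteBelow (fun p x => p ∈ A x) (s := univ) (t := s)

theorem sum_card_filter_mem_sq :
    ∑ p, #{x ∈ s | p ∈ A x} ^ 2 = ∑ x ∈ s, ∑ y ∈ s, #(A x ∩ A y) := by
  have hsq : ∀ p, #{x ∈ s | p ∈ A x} ^ 2 = #{q ∈ s ×ˢ s | p ∈ A q.1 ∩ A q.2} := by
    intro p
    rw [sq, ← card_product]
    congr 1
    ext q
    simp [and_and_and_comm]
  simp_rw [hsq, sum_card_filter_mem, sum_product]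

end DoubleCounting

section ParallelClassCount

variable (Λ : Finset (Fin 4 × Fin 6))

theorem card_eq_sum_lcount : #Λ = ∑ i, lcount Λ i :=
  card_eq_sum_card_fiberwise fun x _ => mem_coe.mpr (mem_univ x.1)

theorem sum_lcount_sq :
    ∑ i, lcount Λ i ^ 2 = ∑ x ∈ Λ, ∑ y ∈ Λ, if x.1 = y.1 then 1 else 0 := by
  have hrow : ∀ x : Fin 4 × Fin 6, (∑ y ∈ Λ, if x.1 = y.1 then 1 else 0) = lcount Λ x.1 := by
    intro x
    simp [lcount, eq_comm]
  simp_rw [hrow, ← sum_fiberwise' Λ Prod.fst (lcount Λ)]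
  refine sum_congr rfl fun i _ => ?_
  rw [sum_const, smul_eq_mul, sq]
  rfl

end ParallelClassCount

namespace Net64

variable {P : Type} [Fintype P] [DecidableEq P] (N : Net64 P) (Λ : Finset (Fin 4 × Fin 6))

def degree (p : P) : ℕ := #{x ∈ Λ | p ∈ N.line x.1 x.2}

theorem pcount_eq (j : ℕ) : N.pcount Λ j = #{p | N.degree Λ p = j} := rfl

theorem eq_of_mem_line_of_mem_line {i : Fin 4} {j j' : Fin 6} {p : P}
    (hj : p ∈ N.line i j) (hj' : p ∈ N.line i j') : j = j' :=
  (N.partition i p).unique hj hj'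

theorem card_inter_line (x y : Fin 4 × Fin 6) :
    #(N.line x.1 x.2 ∩ N.line y.1 y.2) = if x = y then 6 else if x.1 = y.1 then 0 else 1 := by
  obtain ⟨i, j⟩ := x
  obtain ⟨i', j'⟩ := y
  by_cases hxy : (i, j) = (i', j')
  · obtain ⟨rfl, rfl⟩ := Prod.ext_iff.mp hxy
    simp [N.line_card]
  by_cases hi : i = i'
  · subst hi
    have hj : j ≠ j' := fun hj => hxy (by rw [hj])
    rw [if_neg hxy, if_pos rfl, card_eq_zero, eq_empty_iff_forall_notMem]
    exact fun p hp => hj (N.eq_of_mem_line_of_mem_line (mem_inter.mp hp).1 (mem_inter.mp hp).2)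
  · simp [hxy, hi, N.meet i i' j j' hi]

theorem degree_le_four (p : P) : N.degree Λ p ≤ 4 := by
  refine (card_le_card_of_injOn Prod.fst (fun _ _ => mem_coe.mpr (mem_univ _)) ?_).trans
    (card_univ (α := Fin 4)).le
  rintro ⟨i, j⟩ hx ⟨i', j'⟩ hy (rfl : i = i')
  simp only [coe_filter, Set.mem_ofPred_eq] at hx hy
  rw [N.eq_of_mem_line_of_mem_line hx.2 hy.2]

theorem sum_degree : ∑ p, N.degree Λ p = 6 * #Λ := by
  simp [degree, sum_card_filter_mem, N.line_card, mul_comm]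

theorem sum_degree_sq_add_sum_lcount_sq :
    ∑ p, N.degree Λ p ^ 2 + ∑ i, lcount Λ i ^ 2 = 6 * #Λ + #Λ ^ 2 := by
  have hpair : ∀ x y : Fin 4 × Fin 6,
      #(N.line x.1 x.2 ∩ N.line y.1 y.2) + (if x.1 = y.1 then 1 else 0)
        = (if x = y then 6 else 0) + 1 := by
    intro x y
    rw [card_inter_line]
    by_cases hxy : x = y
    · simp [hxy]
    · by_cases hi : x.1 = y.1 <;> simp [hxy, hi]
  simp_rw [degree, sum_card_filter_mem_sq, sum_lcount_sq, ← sum_add_distrib, hpair,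
    sum_add_distrib, sum_ite_eq, sum_const, smul_eq_mul]
  simp [sq, mul_comm]

theorem sum_comp_degree (g : ℕ → ℕ) :
    ∑ p, g (N.degree Λ p) = ∑ j ∈ range 5, g j * N.pcount Λ j := by
  rw [← sum_fiberwise_of_maps_to (t := range 5)
    (fun p _ => mem_range.mpr (Nat.lt_succ_of_le (N.degree_le_four Λ p)))]
  refine sum_congr rfl fun j _ => ?_
  rw [sum_congr rfl fun p hp => by rw [(mem_filter.mp hp).2], sum_const, smul_eq_mul, mul_comm,
    pcount_eq]

theorem cSum_apply (p : P) : N.cSum Λ p = N.degree Λ p := by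
  simp [cSum, chi, degree]

theorem wt_cSum : wt (N.cSum Λ) = N.pcount Λ 1 + N.pcount Λ 3 := by
  have hodd : (univ.filter fun p => N.cSum Λ p ≠ 0)
      = univ.filter (fun p => N.degree Λ p = 1) ∪ univ.filter (fun p => N.degree Λ p = 3) := by
    ext p
    have := N.degree_le_four Λ p
    simp only [mem_filter, mem_union, mem_univ, true_and, cSum_apply, Ne,
      ZMod.natCast_eq_zero_iff]
    omega
  rw [wt, hodd, card_union_of_disjoint (disjoint_filter.mpr fun p _ h1 h3 => by omega)]
  rfl

theorem wt_cSum_add_card_sq :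
    wt (N.cSum Λ) + #Λ ^ 2
      = 6 * #Λ + ∑ i, lcount Λ i ^ 2 + 4 * N.pcount Λ 3 + 8 * N.pcount Λ 4 := by
  have hfirst := N.sum_comp_degree Λ id
  have hsecond := N.sum_comp_degree Λ (· ^ 2)
  simp only [id] at hfirst
  rw [sum_degree] at hfirst
  have hpairs := N.sum_degree_sq_add_sum_lcount_sq Λ
  simp only [sum_range_succ, sum_range_zero] at hfirst hsecond
  rw [wt_cSum]
  omega

end Net64

/-- If `M` is a set of lines of a `(6,4)` net with parallax `(2,2,4,0)` up to permutation
of the parallel classes, then `c(M) ≠ 0`; indeed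
`wt(c(M)) = 4p₃ + 8p₄ + 8 ≥ 8`. -/
theorem net64_parallax_2240 {P : Type} [Fintype P] [DecidableEq P] (N : Net64 P)
    (M : Finset (Fin 4 × Fin 6)) (σ : Equiv.Perm (Fin 4))
    (h : (lcount M (σ 0), lcount M (σ 1), lcount M (σ 2), lcount M (σ 3)) = (2, 2, 4, 0)) :
    N.cSum M ≠ 0 ∧
    wt (N.cSum M) = 4 * N.pcount M 3 + 8 * N.pcount M 4 + 8 ∧
    8 ≤ wt (N.cSum M) := by
  obtain ⟨h0, h1, h2, h3⟩ :
      lcount M (σ 0) = 2 ∧ lcount M (σ 1) = 2 ∧ lcount M (σ 2) = 4 ∧ lcount M (σ 3) = 0 := by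
    simpa [Prod.ext_iff] using h
  have hsum : ∀ g : ℕ → ℕ, ∑ i, g (lcount M i) = g 2 + g 2 + g 4 + g 0 := fun g => by
    rw [← Equiv.sum_comp σ, Fin.sum_univ_four, h0, h1, h2, h3]
  have hcard : #M = 8 := by simpa using (card_eq_sum_lcount M).trans (hsum id)
  have hsq : ∑ i, lcount M i ^ 2 = 24 := hsum (· ^ 2)
  have hwt := N.wt_cSum_add_card_sq M
  rw [hcard, hsq] at hwt
  refine ⟨fun hzero => ?_, by omega, by omega⟩
  have : wt (N.cSum M) = 0 := by simp [hzero, wt]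
  omega
end
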